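/- arXiv:1203.6557 — 8 statements merged into one kernel-verified Lean document; each statement's English description precedes it below -/
import Mathlib

section
/- With Q(z) as above and S(z) := -Q(z)⁻¹Q(z⁻¹), for any z on the unit circle (where all inverses exist) the matrix S(z) is unitary. -/
open Matrix

/-- `Q(z) = 1 - z (A + Bᴴ (z⁻¹ + z - D)⁻¹ B)`. -/
noncomputable def Qmat {n m : ℕ} (A : Matrix (Fin n) (Fin n) ℂ)
    (B : Matrix (Fin m) (Fin n) ℂ) (D : Matrix (Fin m) (Fin m) ℂ) (z : ℂ) :
    Matrix (Fin n) (Fin n) ℂ :=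
  1 - z • (A + Bᴴ * ((z⁻¹ + z) • (1 : Matrix (Fin m) (Fin m) ℂ) - D)⁻¹ * B)

/-- `S(z) = -Q(z)⁻¹ Q(z⁻¹)`. -/
noncomputable def Smat {n m : ℕ} (A : Matrix (Fin n) (Fin n) ℂ)
    (B : Matrix (Fin m) (Fin n) ℂ) (D : Matrix (Fin m) (Fin m) ℂ) (z : ℂ) :
    Matrix (Fin n) (Fin n) ℂ :=
  -((Qmat A B D z)⁻¹ * Qmat A B D z⁻¹)

/-!
For `|z| = 1` we have `z̄ = z⁻¹`, so `z⁻¹ + z - D` is Hermitian and hence so is the effective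
Hamiltonian `H = A + Bᴴ (z⁻¹ + z - D)⁻¹ B`; moreover `H` is unchanged under `z ↦ z⁻¹`. Thus
`Q(z) = 1 - z H` and `Q(z⁻¹) = 1 - z⁻¹ H = Q(z)ᴴ`. Both are polynomials in `H`, so `Q(z)` is normal,
and `Q⁻¹ Qᴴ` is unitary for every invertible normal `Q`.
-/

namespace Matrix

variable {ι α : Type*} [DecidableEq ι] [CommRing α]

theorem commute_one_sub_smul [Fintype ι] (T : Matrix ι ι α) (z w : α) :
    Commute (1 - z • T) (1 - w • T) :=
  (Commute.one_left _).sub_left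
    ((Commute.one_right _).sub_right (((Commute.refl T).smul_left z).smul_right w))

variable [StarRing α]

theorem conjTranspose_one_sub_smul {T : Matrix ι ι α} (hT : T.IsHermitian) (z : α) :
    (1 - z • T)ᴴ = 1 - star z • T := by
  rw [conjTranspose_sub, conjTranspose_one, conjTranspose_smul, hT.eq]

variable [Fintype ι]

theorem nonsing_inv_mul_conjTranspose_mem_unitary {P : Matrix ι ι α} (hP : IsUnit P.det)
    (hnormal : Commute P Pᴴ) : P⁻¹ * Pᴴ ∈ unitary (Matrix ι ι α) := by
  have hPH : IsUnit Pᴴ.det := by simpa [det_conjTranspose] using hP.star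
  have hinv_comm : Pᴴ⁻¹ * P⁻¹ = P⁻¹ * Pᴴ⁻¹ := by
    rw [← mul_inv_rev, ← mul_inv_rev, hnormal.eq]
  have hstar : star (P⁻¹ * Pᴴ) = P * Pᴴ⁻¹ := by
    rw [star_eq_conjTranspose, conjTranspose_mul, conjTranspose_conjTranspose,
      conjTranspose_nonsing_inv]
  refine Unitary.mem_iff.mpr ⟨?_, ?_⟩ <;> rw [hstar]
  · rw [mul_assoc, ← mul_assoc Pᴴ⁻¹, hinv_comm, mul_assoc, nonsing_inv_mul _ hPH, mul_one,
      mul_nonsing_inv _ hP]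
  · rw [mul_assoc, ← mul_assoc Pᴴ, ← hnormal.eq, mul_assoc P, mul_nonsing_inv _ hPH, mul_one,
      nonsing_inv_mul _ hP]

end Matrix

section ScatteringMatrix

variable {n m : ℕ} (A : Matrix (Fin n) (Fin n) ℂ) (B : Matrix (Fin m) (Fin n) ℂ)
  (D : Matrix (Fin m) (Fin m) ℂ) (z : ℂ)

noncomputable def effectiveHamiltonian : Matrix (Fin n) (Fin n) ℂ :=
  A + Bᴴ * ((z⁻¹ + z) • (1 : Matrix (Fin m) (Fin m) ℂ) - D)⁻¹ * B

theorem Qmat_eq_one_sub_smul : Qmat A B D z = 1 - z • effectiveHamiltonian A B D z := rfl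

theorem Qmat_inv_eq_one_sub_smul : Qmat A B D z⁻¹ = 1 - z⁻¹ • effectiveHamiltonian A B D z := by
  rw [Qmat, inv_inv, add_comm z z⁻¹]
  rfl

variable {A D z}

theorem effectiveHamiltonian_isHermitian (hA : A.IsHermitian) (hD : D.IsHermitian)
    (hz : ‖z‖ = 1) : (effectiveHamiltonian A B D z).IsHermitian := by
  have hM : ((z⁻¹ + z) • (1 : Matrix (Fin m) (Fin m) ℂ) - D).IsHermitian := by
    rw [IsHermitian, conjTranspose_sub, conjTranspose_smul, conjTranspose_one, hD.eq, star_add,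
      star_inv₀, Complex.star_def, ← Complex.inv_eq_conj hz, inv_inv, add_comm z]
  rw [IsHermitian, effectiveHamiltonian, conjTranspose_add, conjTranspose_mul, conjTranspose_mul,
    conjTranspose_nonsing_inv, hM.eq, conjTranspose_conjTranspose, hA.eq, ← Matrix.mul_assoc]

theorem Qmat_inv_eq_conjTranspose (hA : A.IsHermitian) (hD : D.IsHermitian) (hz : ‖z‖ = 1) :
    Qmat A B D z⁻¹ = (Qmat A B D z)ᴴ := by
  rw [Qmat_inv_eq_one_sub_smul, Qmat_eq_one_sub_smul,
    conjTranspose_one_sub_smul (effectiveHamiltonian_isHermitian B hA hD hz), Complex.star_def,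
    ← Complex.inv_eq_conj hz]

end ScatteringMatrix

theorem stmt1_general {n m : ℕ} (A : Matrix (Fin n) (Fin n) ℂ) (hA : A.IsHermitian)
    (D : Matrix (Fin m) (Fin m) ℂ) (hD : D.IsHermitian)
    (B : Matrix (Fin m) (Fin n) ℂ) (z : ℂ) (hz : ‖z‖ = 1)
    (hQz : IsUnit (Qmat A B D z).det) :
    (Smat A B D z)ᴴ * Smat A B D z = 1 ∧ Smat A B D z * (Smat A B D z)ᴴ = 1 := by
  have hQ := Qmat_inv_eq_conjTranspose B hA hD hz
  have hnormal : Commute (Qmat A B D z) (Qmat A B D z)ᴴ := by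
    rw [← hQ, Qmat_eq_one_sub_smul, Qmat_inv_eq_one_sub_smul]
    exact commute_one_sub_smul _ _ _
  have hU : Smat A B D z ∈ unitary (Matrix (Fin n) (Fin n) ℂ) := by
    rw [Smat, hQ]
    exact (-(⟨_, nonsing_inv_mul_conjTranspose_mem_unitary hQz hnormal⟩ : unitary _)).2
  exact Unitary.mem_iff.mp hU

theorem stmt1 {n m : ℕ} (A : Matrix (Fin n) (Fin n) ℂ) (hA : A.IsHermitian)
    (D : Matrix (Fin m) (Fin m) ℂ) (hD : D.IsHermitian)
    (B : Matrix (Fin m) (Fin n) ℂ) (z : ℂ) (hz : ‖z‖ = 1)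
    (hinvD : IsUnit ((z⁻¹ + z) • (1 : Matrix (Fin m) (Fin m) ℂ) - D).det)
    (hQz : IsUnit (Qmat A B D z).det)
    (hQzi : IsUnit (Qmat A B D z⁻¹).det) :
    (Smat A B D z)ᴴ * Smat A B D z = 1 ∧ Smat A B D z * (Smat A B D z)ᴴ = 1 :=
  stmt1_general A hA D hD B z hz hQz
end

section
/- With S(z) := -Q(z)⁻¹Q(z⁻¹) defined for z on the unit circle where the inverses exist, one has S(z)† = S(z⁻¹) and S(z⁻¹) = S(z)⁻¹. -/
open Matrix

/-!
Since `z⁻¹ + z` is invariant under `z ↦ z⁻¹`, so is `K(z) = A + Bᴴ (z⁻¹ + z - D)⁻¹ B`, and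
`Q(z) = 1 - z K(z)`, `Q(z⁻¹) = 1 - z⁻¹ K(z)` are polynomials in one matrix, hence commute.
On the unit circle `z⁻¹ + z` is real, so `K(z)` is Hermitian and `Q(z⁻¹) = Q(z)ᴴ`.
Thus `Q(z)` is normal and `S(z) = -Q(z)⁻¹ Q(z)ᴴ`, which makes `S(z)` unitary.
-/

namespace Matrix

variable {ι R : Type*} [Fintype ι] [DecidableEq ι] [CommRing R] [StarRing R]

theorem conjTranspose_neg_inv_mul_conjTranspose {P : Matrix ι ι R} (hP : Commute P Pᴴ) :
    (-(P⁻¹ * Pᴴ))ᴴ = -(Pᴴ⁻¹ * P) := by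
  have hinv : Commute P Pᴴ⁻¹ := by
    simpa only [zpow_neg_one] using Matrix.Commute.zpow_right hP (-1)
  rw [conjTranspose_neg, conjTranspose_mul, conjTranspose_conjTranspose,
    conjTranspose_nonsing_inv, hinv.eq]

theorem inv_neg_inv_mul_conjTranspose {P : Matrix ι ι R} (hP : IsUnit P.det) :
    (-(P⁻¹ * Pᴴ))⁻¹ = -(Pᴴ⁻¹ * P) := by
  have hPH : IsUnit Pᴴ.det := by rw [det_conjTranspose]; exact hP.star
  refine inv_eq_left_inv ?_
  rw [neg_mul_neg, Matrix.mul_assoc, ← Matrix.mul_assoc P, mul_nonsing_inv _ hP,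
    Matrix.one_mul, nonsing_inv_mul _ hPH]

end Matrix

section

variable {n m : ℕ} (A : Matrix (Fin n) (Fin n) ℂ) (B : Matrix (Fin m) (Fin n) ℂ)
  (D : Matrix (Fin m) (Fin m) ℂ)

noncomputable def Kmat (z : ℂ) : Matrix (Fin n) (Fin n) ℂ :=
  A + Bᴴ * ((z⁻¹ + z) • (1 : Matrix (Fin m) (Fin m) ℂ) - D)⁻¹ * B

theorem Qmat_eq_one_sub_smul_Kmat (z : ℂ) : Qmat A B D z = 1 - z • Kmat A B D z := rfl

theorem Kmat_inv (z : ℂ) : Kmat A B D z⁻¹ = Kmat A B D z := by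
  rw [Kmat, Kmat, inv_inv, add_comm z]

theorem commute_Qmat_Qmat_inv (z : ℂ) : Commute (Qmat A B D z) (Qmat A B D z⁻¹) := by
  rw [Qmat_eq_one_sub_smul_Kmat, Qmat_eq_one_sub_smul_Kmat, Kmat_inv]
  have hK : Commute (z • Kmat A B D z) (z⁻¹ • Kmat A B D z) :=
    ((Commute.refl _).smul_left z).smul_right z⁻¹
  exact (Commute.one_left _).sub_left ((Commute.one_right _).sub_right hK)

variable {A D}

theorem isHermitian_Kmat (hA : A.IsHermitian) (hD : D.IsHermitian) {z : ℂ} (hz : ‖z‖ = 1) :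
    (Kmat A B D z).IsHermitian := by
  have hreal : star (z⁻¹ + z) = z⁻¹ + z := by
    rw [Complex.inv_eq_conj hz, star_add, Complex.star_def, Complex.conj_conj, add_comm]
  have hX : ((z⁻¹ + z) • (1 : Matrix (Fin m) (Fin m) ℂ) - D).IsHermitian := by
    rw [IsHermitian, conjTranspose_sub, conjTranspose_smul, conjTranspose_one, hreal, hD.eq]
  exact hA.add (isHermitian_conjTranspose_mul_mul B hX.inv)

theorem conjTranspose_Qmat (hA : A.IsHermitian) (hD : D.IsHermitian) {z : ℂ} (hz : ‖z‖ = 1) :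
    (Qmat A B D z)ᴴ = Qmat A B D z⁻¹ := by
  rw [Qmat_eq_one_sub_smul_Kmat, Qmat_eq_one_sub_smul_Kmat, Kmat_inv, conjTranspose_sub,
    conjTranspose_one, conjTranspose_smul, (isHermitian_Kmat B hA hD hz).eq, Complex.star_def,
    ← Complex.inv_eq_conj hz]

end

theorem stmt2_general {n m : ℕ} (A : Matrix (Fin n) (Fin n) ℂ) (hA : A.IsHermitian)
    (D : Matrix (Fin m) (Fin m) ℂ) (hD : D.IsHermitian)
    (B : Matrix (Fin m) (Fin n) ℂ) (z : ℂ) (hz : ‖z‖ = 1)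
    (hQz : IsUnit (Qmat A B D z).det) :
    (Smat A B D z)ᴴ = Smat A B D z⁻¹ ∧ Smat A B D z⁻¹ = (Smat A B D z)⁻¹ := by
  have hQ := conjTranspose_Qmat B hA hD hz
  have hnormal : Commute (Qmat A B D z) (Qmat A B D z)ᴴ := hQ ▸ commute_Qmat_Qmat_inv A B D z
  have hS : Smat A B D z = -((Qmat A B D z)⁻¹ * (Qmat A B D z)ᴴ) := by rw [Smat, hQ]
  have hS' : Smat A B D z⁻¹ = -((Qmat A B D z)ᴴ⁻¹ * Qmat A B D z) := by rw [Smat, inv_inv, hQ]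
  rw [hS, hS']
  exact ⟨conjTranspose_neg_inv_mul_conjTranspose hnormal,
    (inv_neg_inv_mul_conjTranspose hQz).symm⟩

theorem stmt2 {n m : ℕ} (A : Matrix (Fin n) (Fin n) ℂ) (hA : A.IsHermitian)
    (D : Matrix (Fin m) (Fin m) ℂ) (hD : D.IsHermitian)
    (B : Matrix (Fin m) (Fin n) ℂ) (z : ℂ) (hz : ‖z‖ = 1)
    (hinvD : IsUnit ((z⁻¹ + z) • (1 : Matrix (Fin m) (Fin m) ℂ) - D).det)
    (hQz : IsUnit (Qmat A B D z).det)
    (hQzi : IsUnit (Qmat A B D z⁻¹).det) :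
    (Smat A B D z)ᴴ = Smat A B D z⁻¹ ∧ Smat A B D z⁻¹ = (Smat A B D z)⁻¹ :=
  stmt2_general A hA D hD B z hz hQz
end

section
/- With γ(z) = [[zA-1, zB†],[zB, zD - z² - 1]], the upper-left n×n block of the matrix -γ(z)⁻¹γ(1/z) equals S(z) = -Q(z)⁻¹Q(1/z), and the lower-right m×m block equals -z⁻² times the identity, whenever all inverses exist. -/
open Matrix

/-- `γ(z) = [[zA - 1, zBᴴ], [zB, zD - z² - 1]]`. -/
noncomputable def gamBlocks {n m : ℕ} (A : Matrix (Fin n) (Fin n) ℂ)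
    (B : Matrix (Fin m) (Fin n) ℂ) (D : Matrix (Fin m) (Fin m) ℂ) (z : ℂ) :
    Matrix (Fin n ⊕ Fin m) (Fin n ⊕ Fin m) ℂ :=
  Matrix.fromBlocks (z • A - 1) (z • Bᴴ) (z • B) (z • D - z ^ 2 • 1 - 1)

/-! The second block column of `γ(1/z)` is `z⁻²` times that of `γ(z)`, so `γ(z)⁻¹ γ(1/z)` is block
lower triangular with lower-right block `z⁻²`. Eliminating its lower-left block, the upper-left block
is `s(z)⁻¹ s'(z)`, where `s(z)` is the Schur complement of `d = zD - z² - 1` in `γ(z)` and `s'(z)`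
the same expression built from the first block column of `γ(1/z)`. Since `d = -z (z⁻¹ + z - D)`
and `z⁻¹ + z` is symmetric under `z ↦ 1/z`, these are `-Q(z)` and `-Q(1/z)`; `Q(z)` is invertible
because `det γ(z) = det d · det s(z)`. -/

namespace Matrix

variable {l m α : Type*} [Fintype l] [Fintype m] [DecidableEq l] [DecidableEq m] [CommRing α]

theorem isUnit_det_schur_of_isUnit_det_fromBlocks {a : Matrix l l α} {b : Matrix l m α}
    {c : Matrix m l α} {d : Matrix m m α} (hG : IsUnit (fromBlocks a b c d).det)
    (hd : IsUnit d.det) : IsUnit (a - b * d⁻¹ * c).det := by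
  let := d.invertibleOfIsUnitDet hd
  rw [det_fromBlocks₂₂, invOf_eq_nonsing_inv] at hG
  exact (IsUnit.mul_iff.mp hG).2

theorem inv_fromBlocks_mul_fromBlocks_smul_right (a a' : Matrix l l α) (b : Matrix l m α)
    (c c' : Matrix m l α) (d : Matrix m m α) (t : α) (hG : IsUnit (fromBlocks a b c d).det)
    (hd : IsUnit d.det) :
    (fromBlocks a b c d)⁻¹ * fromBlocks a' (t • b) c' (t • d) =
      fromBlocks ((a - b * d⁻¹ * c)⁻¹ * (a' - b * d⁻¹ * c')) 0
        (d⁻¹ * (c' - c * ((a - b * d⁻¹ * c)⁻¹ * (a' - b * d⁻¹ * c')))) (t • 1) := by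
  set K := (a - b * d⁻¹ * c)⁻¹ * (a' - b * d⁻¹ * c')
  have hK : (a - b * d⁻¹ * c) * K = a' - b * d⁻¹ * c' := by
    rw [← Matrix.mul_assoc, mul_nonsing_inv _ (isUnit_det_schur_of_isUnit_det_fromBlocks hG hd),
      Matrix.one_mul]
  suffices hGM : fromBlocks a b c d * fromBlocks K 0 (d⁻¹ * (c' - c * K)) (t • 1) =
      fromBlocks a' (t • b) c' (t • d) by
    rw [← hGM, ← Matrix.mul_assoc, nonsing_inv_mul _ hG, Matrix.one_mul]
  have h₁₁ : a * K + b * (d⁻¹ * (c' - c * K)) = a' := by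
    rw [← sub_add_cancel a' (b * d⁻¹ * c'), ← hK]
    simp only [Matrix.mul_sub, Matrix.sub_mul, Matrix.mul_assoc]
    abel
  have h₂₁ : c * K + d * (d⁻¹ * (c' - c * K)) = c' := by
    rw [mul_nonsing_inv_cancel_left _ _ hd, add_sub_cancel]
  simp [fromBlocks_multiply, h₁₁, h₂₁]

theorem inv_neg (A : Matrix m m α) : (-A)⁻¹ = -A⁻¹ := by
  by_cases hA : IsUnit A.det
  · simpa using inv_smul' A (-1) hA
  · have hnA : ¬IsUnit (-A).det := by
      rwa [det_neg, IsUnit.mul_iff, not_and_or,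
        or_iff_right (by simp [(isUnit_neg_one (α := α)).pow])]
    rw [nonsing_inv_apply_not_isUnit _ hA, nonsing_inv_apply_not_isUnit _ hnA, neg_zero]

end Matrix

section

variable {n m : ℕ} (A : Matrix (Fin n) (Fin n) ℂ) (B : Matrix (Fin m) (Fin n) ℂ)
  (D : Matrix (Fin m) (Fin m) ℂ) {z : ℂ}

theorem gamBlocks_inv_arg (hz : z ≠ 0) :
    gamBlocks A B D z⁻¹ = fromBlocks (z⁻¹ • A - 1) ((z⁻¹ ^ 2) • (z • Bᴴ)) (z⁻¹ • B)
      ((z⁻¹ ^ 2) • (z • D - z ^ 2 • 1 - 1)) := by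
  have h₁₂ : z⁻¹ • Bᴴ = (z⁻¹ ^ 2) • (z • Bᴴ) := by
    rw [smul_smul]; congr 1; field_simp
  have h₂₂ : z⁻¹ • D - z⁻¹ ^ 2 • (1 : Matrix (Fin m) (Fin m) ℂ) - 1 =
      (z⁻¹ ^ 2) • (z • D - z ^ 2 • 1 - 1) := by
    rw [smul_sub, smul_sub, smul_smul, smul_smul, show z⁻¹ ^ 2 * z = z⁻¹ by field_simp,
      show z⁻¹ ^ 2 * z ^ 2 = 1 by field_simp, one_smul, sub_right_comm]
  rw [gamBlocks, h₁₂, h₂₂]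

theorem Qmat_inv_arg :
    Qmat A B D z⁻¹ =
      1 - z⁻¹ • (A + Bᴴ * ((z⁻¹ + z) • (1 : Matrix (Fin m) (Fin m) ℂ) - D)⁻¹ * B) := by
  rw [Qmat, inv_inv, add_comm z]

theorem inv_resolvent_eq (hz : z ≠ 0)
    (hd : IsUnit (z • D - z ^ 2 • (1 : Matrix (Fin m) (Fin m) ℂ) - 1).det) :
    ((z⁻¹ + z) • (1 : Matrix (Fin m) (Fin m) ℂ) - D)⁻¹ = (-z) • (z • D - z ^ 2 • 1 - 1)⁻¹ := by
  have hR : (z⁻¹ + z) • (1 : Matrix (Fin m) (Fin m) ℂ) - D =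
      (-z)⁻¹ • (z • D - z ^ 2 • 1 - 1) := by
    rw [smul_sub, smul_sub, smul_smul, smul_smul, show (-z)⁻¹ * z = -1 by field_simp,
      show (-z)⁻¹ * z ^ 2 = -z by field_simp, ← neg_inv]
    module
  have := invertibleOfNonzero (inv_ne_zero (neg_ne_zero.mpr hz))
  rw [hR, Matrix.inv_smul _ (-z)⁻¹ hd, invOf_eq_inv, inv_inv]

theorem schur_gamBlocks_eq (w : ℂ) (hz : z ≠ 0)
    (hd : IsUnit (z • D - z ^ 2 • (1 : Matrix (Fin m) (Fin m) ℂ) - 1).det) :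
    w • A - 1 - z • Bᴴ * (z • D - z ^ 2 • 1 - 1)⁻¹ * (w • B) =
      -(1 - w • (A + Bᴴ * ((z⁻¹ + z) • (1 : Matrix (Fin m) (Fin m) ℂ) - D)⁻¹ * B)) := by
  rw [inv_resolvent_eq D hz hd]
  simp only [Matrix.smul_mul, Matrix.mul_smul, smul_smul, smul_add]
  module

end

theorem stmt4_general {n m : ℕ} (A : Matrix (Fin n) (Fin n) ℂ)
    (D : Matrix (Fin m) (Fin m) ℂ) (B : Matrix (Fin m) (Fin n) ℂ)
    (z : ℂ) (hz : z ≠ 0)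
    (hg : IsUnit (gamBlocks A B D z).det)
    (hinv : IsUnit (z • D - z ^ 2 • (1 : Matrix (Fin m) (Fin m) ℂ) - 1).det) :
    (-((gamBlocks A B D z)⁻¹ * gamBlocks A B D z⁻¹)).toBlocks₁₁ =
        -((Qmat A B D z)⁻¹ * Qmat A B D z⁻¹) ∧
      (-((gamBlocks A B D z)⁻¹ * gamBlocks A B D z⁻¹)).toBlocks₂₂ =
        -(z⁻¹ ^ 2) • (1 : Matrix (Fin m) (Fin m) ℂ) := by
  rw [gamBlocks_inv_arg A B D hz, gamBlocks,
    inv_fromBlocks_mul_fromBlocks_smul_right _ _ _ _ _ _ _ hg hinv,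
    schur_gamBlocks_eq A B D z hz hinv, schur_gamBlocks_eq A B D z⁻¹ hz hinv, ← Qmat_inv_arg,
    ← Qmat.eq_1]
  simp [fromBlocks_neg, Matrix.inv_neg]

theorem stmt4 {n m : ℕ} (A : Matrix (Fin n) (Fin n) ℂ)
    (D : Matrix (Fin m) (Fin m) ℂ) (B : Matrix (Fin m) (Fin n) ℂ)
    (z : ℂ) (hz : z ≠ 0)
    (hg : IsUnit (gamBlocks A B D z).det)
    (hgi : IsUnit (gamBlocks A B D z⁻¹).det)
    (hinv : IsUnit (z • D - z ^ 2 • (1 : Matrix (Fin m) (Fin m) ℂ) - 1).det)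
    (hinvi : IsUnit (z⁻¹ • D - z⁻¹ ^ 2 • (1 : Matrix (Fin m) (Fin m) ℂ) - 1).det)
    (hQ : IsUnit (Qmat A B D z).det) :
    (-((gamBlocks A B D z)⁻¹ * gamBlocks A B D z⁻¹)).toBlocks₁₁ =
        -((Qmat A B D z)⁻¹ * Qmat A B D z⁻¹) ∧
      (-((gamBlocks A B D z)⁻¹ * gamBlocks A B D z⁻¹)).toBlocks₂₂ =
        -(z⁻¹ ^ 2) • (1 : Matrix (Fin m) (Fin m) ℂ) :=
  stmt4_general A D B z hz hg hinv
end

section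
/- With γ(z) = z²(P̂ₙ - 1) + zĤ - 1 and W(z) = det γ(z): every root z of W with |z| < 1 is real. -/
open Matrix

/-- Orthogonal projection onto the first `n` coordinates of `ℂ^(n+m)`. -/
noncomputable def Pn (n m : ℕ) : Matrix (Fin n ⊕ Fin m) (Fin n ⊕ Fin m) ℂ :=
  Matrix.fromBlocks 1 0 0 0

/-- `γ(z) = z²(P̂ₙ - 1) + zĤ - 1`. -/
noncomputable def gam {n m : ℕ} (H : Matrix (Fin n ⊕ Fin m) (Fin n ⊕ Fin m) ℂ)
    (z : ℂ) : Matrix (Fin n ⊕ Fin m) (Fin n ⊕ Fin m) ℂ :=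
  z ^ 2 • (Pn n m - 1) + z • H - 1
/-!
If `γ(z) v = 0` with `v ≠ 0`, pairing with `v` gives the real quadratic equation
`(q - s) z² + h z - s = 0`, where `q = ⟨v, P̂ₙ v⟩ ≥ 0`, `h = ⟨v, Ĥ v⟩` and `s = ‖v‖² > 0`.
A non-real root of a real quadratic comes with its conjugate, so by Vieta
`(q - s) |z|² = -s`, i.e. `|z|² = s / (s - q) ≥ 1`.
-/

open scoped ComplexOrder

theorem Complex.mul_normSq_eq_of_quadratic_eq_zero {a b c : ℝ} {z : ℂ} (hz : z.im ≠ 0)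
    (h : a * z ^ 2 + b * z + c = 0) : a * Complex.normSq z = c := by
  have hre := congrArg Complex.re h
  have him := congrArg Complex.im h
  simp only [pow_two, Complex.add_re, Complex.add_im, Complex.mul_re, Complex.mul_im,
    Complex.ofReal_re, Complex.ofReal_im, Complex.zero_re, Complex.zero_im] at hre him
  have hb : b = -2 * a * z.re :=
    mul_left_cancel₀ hz (by linear_combination him)
  rw [Complex.normSq_apply]
  linear_combination (-1 : ℝ) * hre + z.re * hb

theorem Matrix.im_eq_zero_of_det_pencil_eq_zero {ι : Type*} [Fintype ι] [DecidableEq ι]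
    {Q H : Matrix ι ι ℂ} (hQ : Q.PosSemidef) (hH : H.IsHermitian) {z : ℂ} (hz : ‖z‖ < 1)
    (hdet : (z ^ 2 • (Q - 1) + z • H - 1).det = 0) : z.im = 0 := by
  obtain ⟨v, hv, hker⟩ := exists_mulVec_eq_zero_iff.mpr hdet
  obtain ⟨hq_re, hq_im⟩ := Complex.nonneg_iff.mp (hQ.dotProduct_mulVec_nonneg v)
  obtain ⟨hs_re, hs_im⟩ := Complex.pos_iff.mp (dotProduct_star_self_pos_iff.mpr hv)
  have hh_im := hH.im_star_dotProduct_mulVec_self v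
  set q := star v ⬝ᵥ (Q *ᵥ v)
  set s := star v ⬝ᵥ v
  set h := star v ⬝ᵥ (H *ᵥ v)
  have hquad : ((q.re - s.re : ℝ) : ℂ) * z ^ 2 + (h.re : ℂ) * z + ((-s.re : ℝ) : ℂ) = 0 := by
    have hpair : star v ⬝ᵥ ((z ^ 2 • (Q - 1) + z • H - 1) *ᵥ v) = 0 := by
      rw [hker, dotProduct_zero]
    simp only [add_mulVec, sub_mulVec, smul_mulVec, one_mulVec, dotProduct_add,
      dotProduct_sub, dotProduct_smul, smul_eq_mul] at hpair
    have hq : (q.re : ℂ) = q := Complex.ext rfl (by simp [← hq_im])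
    have hs : (s.re : ℂ) = s := Complex.ext rfl (by simp [← hs_im])
    have hh : (h.re : ℂ) = h := Complex.ext rfl (by simpa using hh_im.symm)
    rw [← hpair]
    push_cast
    rw [hq, hs, hh]
    ring
  by_contra hz_im
  have hvieta := Complex.mul_normSq_eq_of_quadratic_eq_zero hz_im hquad
  have hnormSq : Complex.normSq z < 1 := by
    rw [Complex.normSq_eq_norm_sq]
    exact pow_lt_one₀ (norm_nonneg z) hz two_ne_zero
  nlinarith [Complex.normSq_nonneg z]

theorem posSemidef_Pn (n m : ℕ) : (Pn n m).PosSemidef := by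
  have hdiag : Pn n m = diagonal (Sum.elim 1 0) := by
    rw [← fromBlocks_diagonal]
    simp [Pn]
  rw [hdiag, posSemidef_diagonal_iff]
  rintro (i | i) <;> simp

theorem stmt6 {n m : ℕ} (H : Matrix (Fin n ⊕ Fin m) (Fin n ⊕ Fin m) ℂ)
    (hH : H.IsHermitian) (z : ℂ) (hz : ‖z‖ < 1)
    (hroot : (gam H z).det = 0) : z.im = 0 :=
  Matrix.im_eq_zero_of_det_pencil_eq_zero (posSemidef_Pn n m) hH hz hroot
end

section
/- With γ(z) = z²(P̂ₙ - 1) + zĤ - 1: if z ∈ ℂ satisfies |z| = 1, Im(z) ≠ 0, and det γ(z) = 0, then every vector ψ in the null space of γ(z) satisfies ⟨ψ, P̂ₙ ψ⟩ = 0, i.e., P̂ₙψ = 0. -/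
open Matrix

/-!
Pairing `γ(z) ψ = 0` with `ψ` gives `z² (a - s) + z h - s = 0`, where `a = ⟨ψ, P̂ₙ ψ⟩`,
`s = ⟨ψ, ψ⟩` and `h = ⟨ψ, Ĥ ψ⟩` are real. Since `z⁻¹ = z̄`, multiplying by `z̄` and taking
imaginary parts leaves `Im z · a = 0`, so `a = 0`; and `a = ‖P̂ₙ ψ‖²` because `P̂ₙ` is an
orthogonal projection.
-/

theorem Complex.add_eq_zero_of_sq_mul_add_mul_sub_eq_zero {a b s z : ℂ} (ha : a.im = 0)
    (hb : b.im = 0) (hs : s.im = 0) (hz : ‖z‖ = 1) (him : z.im ≠ 0)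
    (h : z ^ 2 * a + z * b - s = 0) : a + s = 0 := by
  have hzz : z * (starRingEnd ℂ) z = 1 := by
    rw [Complex.mul_conj, Complex.normSq_eq_norm_sq, hz]; norm_num
  have h' : z * a + b - (starRingEnd ℂ) z * s = 0 := by
    linear_combination (starRingEnd ℂ) z * h - (z * a + b) * hzz
  have hre : a.re + s.re = 0 := by
    have := congrArg Complex.im h'
    simp only [Complex.sub_im, Complex.add_im, Complex.mul_im, Complex.conj_re,
      Complex.conj_im, ha, hb, hs, Complex.zero_im] at this
    have hprod : z.im * (a.re + s.re) = 0 := by linear_combination this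
    exact (mul_eq_zero.mp hprod).resolve_left him
  exact Complex.ext (by simpa using hre) (by simp [ha, hs])

namespace Matrix

variable {ι : Type*} [Fintype ι]

theorem IsHermitian.mulVec_eq_zero_of_star_dotProduct_mulVec_eq_zero {R : Type*}
    [Ring R] [PartialOrder R] [StarRing R] [StarOrderedRing R] [NoZeroDivisors R]
    {P : Matrix ι ι R} (hP : P.IsHermitian) (hPP : IsIdempotentElem P) {ψ : ι → R}
    (h : star ψ ⬝ᵥ (P *ᵥ ψ) = 0) : P *ᵥ ψ = 0 := by
  have hstar : star ψ ᵥ* P = star (P *ᵥ ψ) := by rw [star_mulVec, hP.eq]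
  rw [← hPP.eq, ← mulVec_mulVec, dotProduct_mulVec, hstar] at h
  exact dotProduct_star_self_eq_zero.mp h

theorem IsHermitian.star_dotProduct_add_one_mulVec_eq_zero [DecidableEq ι]
    {A B : Matrix ι ι ℂ} (hA : A.IsHermitian) (hB : B.IsHermitian) {z : ℂ} (hz : ‖z‖ = 1)
    (him : z.im ≠ 0) {ψ : ι → ℂ} (hψ : (z ^ 2 • A + z • B - 1) *ᵥ ψ = 0) :
    star ψ ⬝ᵥ ((A + 1) *ᵥ ψ) = 0 := by
  have h : z ^ 2 * (star ψ ⬝ᵥ (A *ᵥ ψ)) + z * (star ψ ⬝ᵥ (B *ᵥ ψ)) - star ψ ⬝ᵥ ψ = 0 := by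
    simpa only [add_mulVec, sub_mulVec, smul_mulVec, one_mulVec, dotProduct_add,
      dotProduct_sub, dotProduct_smul, smul_eq_mul, dotProduct_zero] using
      congrArg (star ψ ⬝ᵥ ·) hψ
  rw [add_mulVec, one_mulVec, dotProduct_add]
  refine Complex.add_eq_zero_of_sq_mul_add_mul_sub_eq_zero ?_ ?_ ?_ hz him h
  · exact hA.im_star_dotProduct_mulVec_self ψ
  · exact hB.im_star_dotProduct_mulVec_self ψ
  · simpa using (isHermitian_one (n := ι) (α := ℂ)).im_star_dotProduct_mulVec_self ψ

end Matrix

theorem isHermitian_Pn (n m : ℕ) : (Pn n m).IsHermitian :=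
  IsHermitian.fromBlocks isHermitian_one (by simp) isHermitian_zero

theorem isIdempotentElem_Pn (n m : ℕ) : IsIdempotentElem (Pn n m) := by
  simp [IsIdempotentElem, Pn, fromBlocks_multiply]

open scoped ComplexOrder in
theorem Pn_mulVec_eq_zero_of_star_dotProduct_eq_zero {n m : ℕ} {ψ : Fin n ⊕ Fin m → ℂ}
    (h : star ψ ⬝ᵥ (Pn n m *ᵥ ψ) = 0) : Pn n m *ᵥ ψ = 0 :=
  (isHermitian_Pn n m).mulVec_eq_zero_of_star_dotProduct_mulVec_eq_zero (isIdempotentElem_Pn n m) h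

theorem stmt7_general {n m : ℕ} (H : Matrix (Fin n ⊕ Fin m) (Fin n ⊕ Fin m) ℂ)
    (hH : H.IsHermitian) (z : ℂ) (hz : ‖z‖ = 1) (him : z.im ≠ 0)
    (ψ : Fin n ⊕ Fin m → ℂ) (hψ : gam H z *ᵥ ψ = 0) :
    star ψ ⬝ᵥ (Pn n m *ᵥ ψ) = 0 ∧ Pn n m *ᵥ ψ = 0 := by
  have hquad : star ψ ⬝ᵥ (Pn n m *ᵥ ψ) = 0 := by
    simpa using ((isHermitian_Pn n m).sub isHermitian_one).star_dotProduct_add_one_mulVec_eq_zero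
      hH hz him hψ
  exact ⟨hquad, Pn_mulVec_eq_zero_of_star_dotProduct_eq_zero hquad⟩

theorem stmt7 {n m : ℕ} (H : Matrix (Fin n ⊕ Fin m) (Fin n ⊕ Fin m) ℂ)
    (hH : H.IsHermitian) (z : ℂ) (hz : ‖z‖ = 1) (him : z.im ≠ 0)
    (hdet : (gam H z).det = 0)
    (ψ : Fin n ⊕ Fin m → ℂ) (hψ : gam H z *ᵥ ψ = 0) :
    star ψ ⬝ᵥ (Pn n m *ᵥ ψ) = 0 ∧ Pn n m *ᵥ ψ = 0 :=
  stmt7_general H hH z hz him ψ hψ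
end

section
/- With γ as above: for x₀ ∈ {-1, 1} and any unit vector v with γ(x₀)v = 0 and P̂ₙv ≠ 0, the quantity x₀⟨v, P̂ₙ v⟩ (which equals ⟨v, (dγ/dx)|_{x₀} v⟩) is nonzero. -/
open Matrix

lemma Pn_mul_Pn (n m : ℕ) : Pn n m * Pn n m = Pn n m := by
  simp [Pn, Matrix.fromBlocks_multiply]

lemma Pn_conjTranspose (n m : ℕ) : (Pn n m)ᴴ = Pn n m := by
  simp [Pn, Matrix.fromBlocks_conjTranspose]

theorem stmt10 {n m : ℕ} (H : Matrix (Fin n ⊕ Fin m) (Fin n ⊕ Fin m) ℂ)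
    (hH : H.IsHermitian) (x₀ : ℝ) (hx₀ : x₀ = 1 ∨ x₀ = -1)
    (v : Fin n ⊕ Fin m → ℂ) (hv : star v ⬝ᵥ v = 1)
    (hker : gam H (x₀ : ℂ) *ᵥ v = 0) (hPv : Pn n m *ᵥ v ≠ 0) :
    (x₀ : ℂ) * (star v ⬝ᵥ (Pn n m *ᵥ v)) =
        star v ⬝ᵥ ((H - (2 * (x₀ : ℂ)) • (1 - Pn n m)) *ᵥ v) ∧
      (x₀ : ℂ) * (star v ⬝ᵥ (Pn n m *ᵥ v)) ≠ 0 := by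
  have hx2 : (x₀ : ℂ) ^ 2 = 1 := by rcases hx₀ with h | h <;> subst h <;> norm_num
  have hxne : (x₀ : ℂ) ≠ 0 := by rcases hx₀ with h | h <;> subst h <;> norm_num
  set a : ℂ := star v ⬝ᵥ (Pn n m *ᵥ v) with ha
  -- value of ⟨v, Hv⟩
  have hker' : star v ⬝ᵥ (gam H (x₀ : ℂ) *ᵥ v) = 0 := by rw [hker]; simp
  have hHv : (x₀ : ℂ) * (star v ⬝ᵥ (H *ᵥ v)) = 2 - a := by
    rw [gam] at hker'
    simp only [Matrix.add_mulVec, Matrix.sub_mulVec, Matrix.smul_mulVec,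
      Matrix.one_mulVec, dotProduct_add, dotProduct_sub, dotProduct_smul,
      smul_eq_mul, hv, ← ha] at hker'
    rw [hx2] at hker'
    linear_combination hker'
  have hb : star v ⬝ᵥ (H *ᵥ v) = (x₀ : ℂ) * (2 - a) := by
    apply mul_left_cancel₀ hxne
    rw [hHv]
    linear_combination (a - 2) * hx2
  constructor
  · -- first part
    simp only [Matrix.sub_mulVec, Matrix.smul_mulVec, Matrix.one_mulVec,
      dotProduct_sub, dotProduct_smul, smul_eq_mul, hv, ← ha]
    linear_combination -hb
  · -- second part
    have key : a = star (Pn n m *ᵥ v) ⬝ᵥ (Pn n m *ᵥ v) := by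
      rw [ha, Matrix.star_mulVec, Pn_conjTranspose, ← Matrix.dotProduct_mulVec,
        Matrix.mulVec_mulVec, Pn_mul_Pn]
    have hane : a ≠ 0 := by
      rw [key]
      open ComplexOrder in
      simpa using (dotProduct_star_self_eq_zero (v := Pn n m *ᵥ v)).not.mpr hPv
    exact mul_ne_zero hxne hane
end

section
/- det(S(z)) = (-1)ⁿ z^{2m} W(1/z)/W(z), where W(z) = det γ(z), γ(z) = z²(P̂ₙ - 1) + zĤ - 1, and S(z) is the upper-left n×n block of -γ(z)⁻¹γ(1/z), valid whenever z ≠ 0 and γ(z) is invertible. -/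
/-! Since `P̂ₙ` vanishes on the last `m` coordinates, the last `m` columns of `γ(w)` are
`-(w² + 1) eⱼ + w Ĥ eⱼ`, so those of `γ(1/z)` are `z⁻²` times those of `γ(z)`. Hence the last `m`
columns of `-γ(z)⁻¹ γ(1/z)` are `-z⁻² eⱼ`, and its determinant `(-1)^(n+m) W(1/z) / W(z)` is
`det S(z) · (-z⁻²)^m`. -/

open Matrix

namespace Matrix

variable {ι κ R : Type*} [Fintype ι] [Fintype κ] [DecidableEq ι] [DecidableEq κ] [CommRing R]

theorem det_eq_det_toBlocks₁₁_mul_of_mul_fromBlocks_eq_smul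
    (M : Matrix (ι ⊕ κ) (ι ⊕ κ) R) (c : R)
    (hM : M * fromBlocks 0 0 0 1 = c • fromBlocks 0 0 0 1) :
    M.det = M.toBlocks₁₁.det * c ^ Fintype.card κ := by
  rw [← fromBlocks_toBlocks M, fromBlocks_multiply, fromBlocks_smul] at hM
  simp only [Matrix.mul_zero, Matrix.mul_one, zero_add, add_zero, smul_zero] at hM
  obtain ⟨-, h₁₂, -, h₂₂⟩ := fromBlocks_inj.mp hM
  conv_lhs => rw [← fromBlocks_toBlocks M, h₁₂, h₂₂]
  rw [det_fromBlocks_zero₁₂, det_smul, det_one, mul_one]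

end Matrix

section gam

variable {n m : ℕ}

theorem gam_mul_fromBlocks_zero_one (H : Matrix (Fin n ⊕ Fin m) (Fin n ⊕ Fin m) ℂ) (w : ℂ) :
    gam H w * fromBlocks 0 0 0 1 =
      (-(w ^ 2 + 1)) • fromBlocks 0 0 0 1 + w • (H * fromBlocks 0 0 0 1) := by
  have hP : (Pn n m - 1) * fromBlocks (0 : Matrix (Fin n) (Fin n) ℂ) 0 0 1 =
      -fromBlocks 0 0 0 1 := by
    rw [sub_mul, Matrix.one_mul, Pn, fromBlocks_multiply]
    simp
  rw [gam, sub_mul, add_mul, Matrix.smul_mul, Matrix.smul_mul, hP, Matrix.one_mul]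
  match_scalars <;> ring

theorem gam_inv_mul_fromBlocks_zero_one (H : Matrix (Fin n ⊕ Fin m) (Fin n ⊕ Fin m) ℂ) {z : ℂ}
    (hz : z ≠ 0) :
    gam H z⁻¹ * fromBlocks 0 0 0 1 = (z⁻¹ ^ 2) • (gam H z * fromBlocks 0 0 0 1) := by
  rw [gam_mul_fromBlocks_zero_one, gam_mul_fromBlocks_zero_one, smul_add, smul_smul, smul_smul]
  congr 2
  · field_simp
    ring
  · field_simp

end gam

theorem stmt12_general {n m : ℕ} (H : Matrix (Fin n ⊕ Fin m) (Fin n ⊕ Fin m) ℂ)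
    (z : ℂ) (hz : z ≠ 0)
    (hdet : IsUnit (gam H z).det) :
    ((-(gam H z)⁻¹ * gam H z⁻¹).toBlocks₁₁).det =
      (-1 : ℂ) ^ n * z ^ (2 * m) * (gam H z⁻¹).det / (gam H z).det := by
  set M := -(gam H z)⁻¹ * gam H z⁻¹ with hM
  have hMQ : M * fromBlocks 0 0 0 1 = (-z⁻¹ ^ 2) • fromBlocks 0 0 0 1 := by
    rw [Matrix.mul_assoc, gam_inv_mul_fromBlocks_zero_one H hz, Matrix.mul_smul, Matrix.neg_mul,
      ← Matrix.mul_assoc, nonsing_inv_mul _ hdet, Matrix.one_mul, smul_neg, neg_smul]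
  have hdetM : M.det = (-1) ^ (n + m) * (gam H z⁻¹).det / (gam H z).det := by
    rw [hM, neg_mul, det_neg, det_mul, det_nonsing_inv, Ring.inverse_eq_inv', Fintype.card_sum,
      Fintype.card_fin, Fintype.card_fin]
    ring
  have hblock := det_eq_det_toBlocks₁₁_mul_of_mul_fromBlocks_eq_smul M _ hMQ
  rw [hdetM, Fintype.card_fin, pow_add] at hblock
  have hscale : (-z⁻¹ ^ 2) ^ m * ((-1) ^ m * z ^ (2 * m)) = 1 := by
    rw [pow_mul, ← mul_pow, ← mul_pow]
    field_simp
    simp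
  have hsign : (-1 : ℂ) ^ m * (-1) ^ m = 1 := by
    rw [← mul_pow]
    simp
  linear_combination (-((-1) ^ m * z ^ (2 * m))) * hblock - M.toBlocks₁₁.det * hscale +
    (-1) ^ n * z ^ (2 * m) * (gam H z⁻¹).det / (gam H z).det * hsign

theorem stmt12 {n m : ℕ} (H : Matrix (Fin n ⊕ Fin m) (Fin n ⊕ Fin m) ℂ)
    (hH : H.IsHermitian) (z : ℂ) (hz : z ≠ 0)
    (hdet : IsUnit (gam H z).det) :
    ((-(gam H z)⁻¹ * gam H z⁻¹).toBlocks₁₁).det =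
      (-1 : ℂ) ^ n * z ^ (2 * m) * (gam H z⁻¹).det / (gam H z).det :=
  stmt12_general H z hz hdet
end

section
/- For z ≠ 0 with γ(z) invertible and P̂ₙγ(z)⁻¹ and γ(1/z) well-defined, the following identity of (m+n)×(m+n) matrices holds: P̂ₙγ(z)⁻¹γ(1/z)P̂ₙ = z⁻⁴P̂ₙ - z⁻³(z⁻² - 1)(Ĥ - z - 1/z)P̂ₙ + z⁻²(z⁻² - 1)(Ĥ - z - 1/z)γ(z)⁻¹(Ĥ - z - 1/z)P̂ₙ. -/
open Matrix

theorem stmt16 {n m : ℕ} (H : Matrix (Fin n ⊕ Fin m) (Fin n ⊕ Fin m) ℂ)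
    (hH : H.IsHermitian) (z : ℂ) (hz : z ≠ 0)
    (hdet : IsUnit (gam H z).det) :
    Pn n m * (gam H z)⁻¹ * gam H z⁻¹ * Pn n m =
      z⁻¹ ^ 4 • Pn n m
        - (z⁻¹ ^ 3 * (z⁻¹ ^ 2 - 1)) • ((H - (z + z⁻¹) • 1) * Pn n m)
        + (z⁻¹ ^ 2 * (z⁻¹ ^ 2 - 1)) •
            ((H - (z + z⁻¹) • 1) * (gam H z)⁻¹ * (H - (z + z⁻¹) • 1) * Pn n m) := by
  have h1 : Pn n m * Pn n m = Pn n m := by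
    simp [Pn, Matrix.fromBlocks_multiply]
  have h2 : gam H z * (gam H z)⁻¹ = 1 := Matrix.mul_nonsing_inv _ hdet
  have h3 : (gam H z)⁻¹ * gam H z = 1 := Matrix.nonsing_inv_mul _ hdet
  have h4 : Pn n m = z⁻¹ ^ 2 • gam H z - z⁻¹ • (H - (z + z⁻¹) • 1) := by
    rw [gam]; match_scalars <;> field_simp <;> ring
  have h5 : gam H z⁻¹ = z⁻¹ ^ 2 • gam H z + (z⁻¹ ^ 2 - 1) • Pn n m := by
    rw [gam, gam]; match_scalars <;> field_simp <;> ring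
  -- now make everything opaque
  set P : Matrix (Fin n ⊕ Fin m) (Fin n ⊕ Fin m) ℂ := Pn n m with hPdef
  set A : Matrix (Fin n ⊕ Fin m) (Fin n ⊕ Fin m) ℂ := gam H z with hAdef
  set B : Matrix (Fin n ⊕ Fin m) (Fin n ⊕ Fin m) ℂ := (gam H z)⁻¹ with hBdef
  set K : Matrix (Fin n ⊕ Fin m) (Fin n ⊕ Fin m) ℂ := H - (z + z⁻¹) • 1 with hKdef
  rw [h5]
  clear_value P A B K
  have hPB : P * B = z⁻¹ ^ 2 • (1 : Matrix (Fin n ⊕ Fin m) (Fin n ⊕ Fin m) ℂ)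
      - z⁻¹ • (K * B) := by
    rw [h4, Matrix.sub_mul, smul_mul_assoc, smul_mul_assoc, h2]
  have h6 : K * B * P = z⁻¹ ^ 2 • (K * P) - z⁻¹ • (K * B * K * P) := by
    have e1 : K * B * P = K * B * ((z⁻¹ ^ 2 • A - z⁻¹ • K) * P) := by
      rw [← h4, Matrix.mul_assoc, h1, Matrix.mul_assoc]
    rw [e1, Matrix.sub_mul, smul_mul_assoc, smul_mul_assoc, Matrix.mul_sub,
      Matrix.mul_smul, Matrix.mul_smul]
    congr 2
    · rw [← Matrix.mul_assoc (K * B) A P, Matrix.mul_assoc K B A, h3, Matrix.mul_one]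
    · simp [Matrix.mul_assoc]
  have hstep : P * B * (z⁻¹ ^ 2 • A + (z⁻¹ ^ 2 - 1) • P) * P
      = z⁻¹ ^ 2 • P + (z⁻¹ ^ 2 - 1) • (P * B * P) := by
    rw [Matrix.mul_add, Matrix.mul_smul, Matrix.mul_smul, Matrix.add_mul,
      smul_mul_assoc, smul_mul_assoc, Matrix.mul_assoc (P * B) A P,
      Matrix.mul_assoc P B (A * P), ← Matrix.mul_assoc B A P, h3, Matrix.one_mul,
      Matrix.mul_assoc (P * B) P P, h1]
  rw [hstep]
  have hPBP : P * B * P = z⁻¹ ^ 2 • P - z⁻¹ • (K * B * P) := by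
    rw [hPB, Matrix.sub_mul, smul_mul_assoc, smul_mul_assoc, Matrix.one_mul]
  rw [hPBP, h6]
  module
end
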